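/- Let G = C(α_1,…,α_{2k}) be a C-graph with adjacency matrix A. Then the multiplicity m_0 of the eigenvalue 0 of A equals ∑_{i=1}^{k} α_{2i} − k. -/

import Mathlib

/-!
With the 0-based cell indices of `cographC α (2 * k)`, cell `j` is a clique for even `j` and an
independent set for odd `j`, and vertices in distinct cells `i`, `j` are adjacent iff `max i j` is
odd. Hence `(A x)_u` depends only on the cell sums `c_j` of `x` and, in a clique cell, on `x_u`.
If `A x = 0`, let `R_t` be the sum of the `c_{2l+1}` with `t ≤ l`; the vertex equations turn into
a three-term recurrence for `R` along which `|R_t|` is nondecreasing, and `R_k = 0` then forces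
every cell sum to vanish. So `ker A` consists of the vectors that vanish on the clique cells and
sum to zero on each independent cell, of dimension `∑ (α_{2i+1} - 1)`. Since `A` is symmetric,
`ker A² = ker A`, so this dimension is the multiplicity of the root `0` of the characteristic
polynomial.
-/

open Matrix BigOperators
open scoped Classical

/-- The equivalence splitting off the last cell of `Σ j : Fin (m+1), Fin (α j)`. -/
def splitLast (α : ℕ → ℕ) (m : ℕ) :
    (Σ j : Fin (m + 1), Fin (α j.val)) ≃ (Σ j : Fin m, Fin (α j.val)) ⊕ Fin (α m) where
  toFun x :=
    if h : x.1.val < m then Sum.inl ⟨⟨x.1.val, h⟩, x.2⟩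
    else Sum.inr (Fin.cast (congrArg α
      (Nat.le_antisymm (Nat.lt_succ_iff.mp x.1.isLt) (Nat.le_of_not_lt h))) x.2)
  invFun x :=
    match x with
    | Sum.inl y => ⟨⟨y.1.val, Nat.lt_succ_of_lt y.1.isLt⟩, y.2⟩
    | Sum.inr a => ⟨⟨m, Nat.lt_succ_self m⟩, a⟩
  left_inv := by
    rintro ⟨⟨jv, hj⟩, a⟩
    by_cases h : jv < m
    · simp [h]
    · have hm : jv = m := Nat.le_antisymm (Nat.lt_succ_iff.mp hj) (Nat.le_of_not_lt h)
      subst hm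
      simp [h, Fin.cast]
  right_inv := by
    rintro (⟨⟨jv, hj⟩, a⟩ | a)
    · simp [hj]
    · simp [Fin.cast]

/-- The cograph `C(α 0, α 1, …, α (m-1))` (1-indexed in the paper: `C(α_1,…,α_m)`),
defined recursively: `C(α_1)` is the complement of the complete graph `K_{α_1}`, and
`C(α_1,…,α_i)` is the complement of the disjoint union of `C(α_1,…,α_{i-1})` and `K_{α_i}`.
The vertices added at step `j` (the cell `C_j`) are the pairs `⟨j, a⟩`. -/
def cographC (α : ℕ → ℕ) : (m : ℕ) → SimpleGraph (Σ j : Fin m, Fin (α j.val))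
  | 0 => ⊥
  | m + 1 =>
      SimpleGraph.comap (splitLast α m)
        ((cographC α m ⊕g (⊤ : SimpleGraph (Fin (α m))))ᶜ)

/-- The real adjacency matrix of a finite simple graph. -/
noncomputable def adjMat {V : Type*} [Fintype V] (G : SimpleGraph V) : Matrix V V ℝ :=
  Matrix.of fun u v => if G.Adj u v then (1 : ℝ) else 0

open Finset

theorem sum_range_two_mul {M : Type*} [AddCommMonoid M] (f : ℕ → M) (k : ℕ) :
    ∑ i ∈ range (2 * k), f i = ∑ l ∈ range k, (f (2 * l) + f (2 * l + 1)) := by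
  induction k with
  | zero => simp
  | succ k ih => rw [Nat.mul_succ, sum_range_succ, sum_range_succ, sum_range_succ, ih, add_assoc]

section OrderedField

variable {K : Type*} [Field K] [LinearOrder K] [IsStrictOrderedRing K]

theorem abs_le_abs_of_mul_eq_sub_one_mul {a y z : K} (ha : 1 ≤ a) (h : a * y = (a - 1) * z) :
    |y| ≤ |z| := by
  have h' := congrArg abs h
  rw [abs_mul, abs_mul, abs_of_pos (by linarith : 0 < a), abs_of_nonneg (by linarith : 0 ≤ a - 1)]
    at h'
  nlinarith [abs_nonneg z]

theorem abs_le_abs_of_three_term {a x y z : K} (ha : 1 ≤ a)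
    (h : (3 * a - 2) * y = (a - 1) * (x + z)) (hxy : |x| ≤ |y|) : |y| ≤ |z| := by
  have h' : (3 * a - 2) * |y| ≤ (a - 1) * (|x| + |z|) := by
    rw [← abs_of_pos (by linarith : 0 < 3 * a - 2), ← abs_mul, h, abs_mul,
      abs_of_nonneg (by linarith : 0 ≤ a - 1)]
    exact mul_le_mul_of_nonneg_left (abs_add_le x z) (by linarith)
  nlinarith [abs_nonneg z]

/-- Read `E t`, `o t` as the sums of `x` over the cells `2 t`, `2 t + 1` of `cographC α (2 * k)`
and `a t` as `α (2 * t)`: `hodd` and `heven` are then the equations `(A x)_u = 0` for `u` in these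
cells, the latter summed over its cell. -/
theorem eq_zero_of_cell_equations {k : ℕ} (a : ℕ → K) (ha : ∀ t < k, 1 ≤ a t) (E o : ℕ → K)
    (hodd : ∀ t < k, ∑ l ∈ range (t + 1), E l + ∑ l ∈ range k, o l = o t)
    (heven : ∀ t < k, E t = a t * (E t + ∑ l ∈ Ico t k, o l)) :
    ∀ t < k, E t = 0 ∧ o t = 0 := by
  set R : ℕ → K := fun t => ∑ l ∈ Ico t k, o l with hR
  have hR_succ : ∀ t < k, R t = o t + R (t + 1) := fun t ht => sum_eq_sum_Ico_succ_bot ht o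
  have hR_top : ∀ t, k ≤ t → R t = 0 := fun t ht => by simp [hR, Ico_eq_empty_of_le ht]
  have hE_zero : 0 < k → E 0 = -R 1 := by
    intro hk
    have h := hodd 0 hk
    rw [sum_range_one, range_eq_Ico] at h
    linarith [hR_succ 0 hk]
  have hE_succ : ∀ t, t + 1 < k → E (t + 1) = o (t + 1) - o t := by
    intro t ht
    have h1 := hodd t (by omega)
    have h2 := hodd (t + 1) ht
    rw [sum_range_succ] at h2
    linarith
  have hmono : Monotone fun t => |R t| := by
    refine monotone_nat_of_le_succ fun t => ?_
    induction t with
    | zero =>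
      rcases Nat.eq_zero_or_pos k with hk | hk
      · simp [hR_top 0 hk.le, hR_top 1 (by omega)]
      refine abs_le_abs_of_mul_eq_sub_one_mul (ha 0 hk) ?_
      linear_combination (-1) * heven 0 hk + (1 - a 0) * hE_zero hk
    | succ t ih =>
      rcases le_or_gt k (t + 1) with hk | hk
      · simp [hR_top (t + 1) hk, hR_top (t + 2) (by omega)]
      have hE : E (t + 1) = 2 * R (t + 1) - R (t + 2) - R t := by
        linarith [hE_succ t hk, hR_succ t (by omega), hR_succ (t + 1) hk]
      exact abs_le_abs_of_three_term (ha (t + 1) hk)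
        (by linear_combination (-1) * heven (t + 1) hk + (1 - a (t + 1)) * hE) ih
  have hR_zero : ∀ t, R t = 0 := fun t =>
    abs_eq_zero.1 (le_antisymm ((hmono (le_max_left t k)).trans
      (by simp [hR_top _ (le_max_right t k)])) (abs_nonneg _))
  intro t ht
  have ho : o t = 0 := by linarith [hR_succ t ht, hR_zero t, hR_zero (t + 1)]
  refine ⟨?_, ho⟩
  cases t with
  | zero => rw [hE_zero ht, hR_zero, neg_zero]
  | succ t => rw [hE_succ t ht, ho]; linarith [hR_succ t (by omega), hR_zero t, hR_zero (t + 1)]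

theorem Matrix.IsSymm.rootMultiplicity_zero_charpoly {n : Type*} [Fintype n] [DecidableEq n]
    {A : Matrix n n K} (hA : A.IsSymm) :
    A.charpoly.rootMultiplicity 0 = Module.finrank K (LinearMap.ker A.mulVecLin) := by
  have hsq : LinearMap.ker (A.mulVecLin ^ 2) = LinearMap.ker A.mulVecLin := by
    rw [← ker_mulVecLin_transpose_mul_self, hA.eq, mulVecLin_mul, pow_two]
    rfl
  have hmax : Module.End.maxGenEigenspace A.mulVecLin 0 = LinearMap.ker A.mulVecLin := by
    ext v
    simp only [Module.End.mem_maxGenEigenspace, zero_smul, sub_zero]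
    refine ⟨fun ⟨m, hm⟩ => ?_, fun hv => ⟨1, by simpa using hv⟩⟩
    rcases m with _ | m
    · simp_all
    · have := Module.End.ker_pow_constant (f := A.mulVecLin) (k := 1) (by rw [pow_one, hsq]) m
      rw [pow_one, add_comm] at this
      rwa [this, LinearMap.mem_ker]
  rw [← charpoly_toLin', toLin'_apply', Polynomial.rootMultiplicity_eq_natTrailingDegree',
    ← LinearMap.finrank_maxGenEigenspace_zero_eq, hmax]

end OrderedField

theorem Submodule.finrank_pi_univ {K ι : Type*} [Field K] [Fintype ι] {M : ι → Type*}
    [∀ i, AddCommGroup (M i)] [∀ i, Module K (M i)] [∀ i, FiniteDimensional K (M i)]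
    (p : ∀ i, Submodule K (M i)) :
    Module.finrank K (Submodule.pi Set.univ p) = ∑ i, Module.finrank K (p i) := by
  let e : Submodule.pi Set.univ p ≃ₗ[K] ∀ i, p i :=
    { toFun := fun x i => ⟨x.1 i, x.2 i trivial⟩
      invFun := fun y => ⟨fun i => y i, fun i _ => (y i).2⟩
      map_add' := fun _ _ => rfl
      map_smul' := fun _ _ => rfl
      left_inv := fun _ => rfl
      right_inv := fun _ => rfl }
  rw [e.finrank_eq, Module.finrank_pi_fintype]

theorem adjMat_isSymm {V : Type*} [Fintype V] (G : SimpleGraph V) : (adjMat G).IsSymm := by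
  ext u v
  simp [adjMat, G.adj_comm]

theorem adjMat_mulVec_of_adj_iff {ι : Type*} [Fintype ι] {β : ι → Type*} [∀ i, Fintype (β i)]
    (G : SimpleGraph (Σ i, β i)) (r : ι → ι → Prop) (hG : ∀ u w, G.Adj u w ↔ u ≠ w ∧ r u.1 w.1)
    (x : (Σ i, β i) → ℝ) (u : Σ i, β i) :
    (adjMat G *ᵥ x) u =
      ∑ i, (if r u.1 i then ∑ b, x ⟨i, b⟩ else 0) - if r u.1 u.1 then x u else 0 := by
  have hterm : ∀ w, adjMat G u w * x w =
      (if r u.1 w.1 then x w else 0) - if u = w then (if r u.1 u.1 then x u else 0) else 0 := by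
    intro w
    by_cases hw : u = w
    · subst hw; simp [adjMat, hG]
    · simp [adjMat, hG, hw]
  simp only [mulVec, dotProduct, hterm, sum_sub_distrib, sum_ite_eq, mem_univ, if_true,
    Fintype.sum_sigma]
  congr 1
  exact sum_congr rfl fun i _ => by split_ifs <;> simp

def CellAdj (i j : ℕ) : Prop := if i = j then Even i else Odd (max i j)

theorem cographC_adj (α : ℕ → ℕ) (m : ℕ) (x y : Σ j : Fin m, Fin (α j)) :
    (cographC α m).Adj x y ↔ x ≠ y ∧ (CellAdj x.1 y.1 ↔ Even m) := by
  induction m with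
  | zero => exact x.1.elim0
  | succ m ih =>
    obtain ⟨p, rfl⟩ := (splitLast α m).symm.surjective x
    obtain ⟨q, rfl⟩ := (splitLast α m).symm.surjective y
    rw [(splitLast α m).symm.injective.ne_iff, Nat.even_add_one]
    change ((cographC α m ⊕g ⊤)ᶜ).Adj (splitLast α m ((splitLast α m).symm p))
      (splitLast α m ((splitLast α m).symm q)) ↔ _
    simp only [Equiv.apply_symm_apply, SimpleGraph.compl_adj]
    rcases p with y | a <;> rcases q with y' | b
    · simp only [ne_eq, Sum.inl.injEq, SimpleGraph.sum_adj_inl, ih]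
      change _ ↔ _ ∧ (CellAdj y.1 y'.1 ↔ _)
      tauto
    · have hlt := y.1.isLt
      refine iff_of_true ⟨Sum.inl_ne_inr, by simp⟩ ⟨Sum.inl_ne_inr, ?_⟩
      change CellAdj y.1 m ↔ ¬Even m
      rw [CellAdj, if_neg hlt.ne, max_eq_right hlt.le, Nat.not_even_iff_odd]
    · have hlt := y'.1.isLt
      refine iff_of_true ⟨Sum.inr_ne_inl, by simp⟩ ⟨Sum.inr_ne_inl, ?_⟩
      change CellAdj m y'.1 ↔ ¬Even m
      rw [CellAdj, if_neg hlt.ne', max_eq_left hlt.le, Nat.not_even_iff_odd]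
    · refine iff_of_false (fun ⟨hne, hnadj⟩ => hnadj fun hab => hne (hab ▸ rfl)) fun h => ?_
      change _ ∧ (CellAdj m m ↔ _) at h
      rw [CellAdj, if_pos rfl] at h
      exact iff_not_self h.2

noncomputable def cellSum {α : ℕ → ℕ} {m : ℕ} (x : (Σ j : Fin m, Fin (α j)) → ℝ) (i : ℕ) : ℝ :=
  if h : i < m then ∑ a, x ⟨⟨i, h⟩, a⟩ else 0

theorem cographC_two_mul_mulVec_apply (α : ℕ → ℕ) (k : ℕ)
    (x : (Σ j : Fin (2 * k), Fin (α j)) → ℝ) (j : Fin (2 * k)) (a : Fin (α j)) :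
    (adjMat (cographC α (2 * k)) *ᵥ x) ⟨j, a⟩ =
      ∑ i ∈ range (2 * k), (if CellAdj j i then cellSum x i else 0) -
        if Even (j : ℕ) then x ⟨j, a⟩ else 0 := by
  have hG : ∀ u w, (cographC α (2 * k)).Adj u w ↔ u ≠ w ∧ CellAdj u.1 w.1 := fun u w => by
    simp [cographC_adj]
  rw [adjMat_mulVec_of_adj_iff _ (fun i j : Fin (2 * k) => CellAdj i j) hG,
    ← Fin.sum_univ_eq_sum_range (fun i => if CellAdj j i then cellSum x i else 0)]
  simp [cellSum, CellAdj]

theorem sum_cellAdj_two_mul {M : Type*} [AddCommMonoid M] (c : ℕ → M) {k t : ℕ} (ht : t < k) :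
    ∑ i ∈ range (2 * k), (if CellAdj (2 * t) i then c i else 0) =
      c (2 * t) + ∑ l ∈ Ico t k, c (2 * l + 1) := by
  have hE : (range k).filter (fun l => CellAdj (2 * t) (2 * l)) = {t} := by
    ext l; simp only [CellAdj, Nat.odd_iff, Nat.even_iff, mem_filter, mem_range, mem_singleton]
    split_ifs <;> omega
  have hO : (range k).filter (fun l => CellAdj (2 * t) (2 * l + 1)) = Ico t k := by
    ext l; simp only [CellAdj, Nat.odd_iff, mem_Ico, mem_filter, mem_range]
    split_ifs <;> omega
  rw [sum_range_two_mul, sum_add_distrib, ← sum_filter, ← sum_filter, hE, hO, sum_singleton]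

theorem sum_cellAdj_two_mul_add_one {M : Type*} [AddCommMonoid M] (c : ℕ → M) {k t : ℕ}
    (ht : t < k) :
    ∑ i ∈ range (2 * k), (if CellAdj (2 * t + 1) i then c i else 0) + c (2 * t + 1) =
      ∑ l ∈ range (t + 1), c (2 * l) + ∑ l ∈ range k, c (2 * l + 1) := by
  have hE : (range k).filter (fun l => CellAdj (2 * t + 1) (2 * l)) = range (t + 1) := by
    ext l; simp only [CellAdj, Nat.odd_iff, mem_filter, mem_range]
    split_ifs <;> omega
  have hO : (range k).filter (fun l => CellAdj (2 * t + 1) (2 * l + 1)) = (range k).erase t := by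
    ext l; simp only [CellAdj, Nat.odd_iff, Nat.even_iff, mem_erase, mem_filter, mem_range]
    split_ifs <;> omega
  rw [sum_range_two_mul, sum_add_distrib, ← sum_filter, ← sum_filter, hE, hO, add_assoc,
    sum_erase_add _ _ (mem_range.2 ht)]

theorem cellSum_eq_zero_of_cographC_mulVec_eq_zero {α : ℕ → ℕ} {k : ℕ}
    (hα : ∀ i < 2 * k, 0 < α i) {x : (Σ j : Fin (2 * k), Fin (α j)) → ℝ}
    (hx : adjMat (cographC α (2 * k)) *ᵥ x = 0) (i : ℕ) : cellSum x i = 0 := by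
  set s : ℕ → ℝ := fun j => ∑ i ∈ range (2 * k), if CellAdj j i then cellSum x i else 0
  have hvertex : ∀ (j : Fin (2 * k)) (a : Fin (α j)), s j = if Even (j : ℕ) then x ⟨j, a⟩ else 0 :=
    fun j a => sub_eq_zero.1 ((cographC_two_mul_mulVec_apply α k x j a).symm.trans
      (congrFun hx ⟨j, a⟩))
  have hodd : ∀ t < k, ∑ l ∈ range (t + 1), cellSum x (2 * l) +
      ∑ l ∈ range k, cellSum x (2 * l + 1) = cellSum x (2 * t + 1) := by
    intro t ht
    have h := hvertex ⟨2 * t + 1, by omega⟩ ⟨0, hα _ (by omega)⟩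
    rw [if_neg (by simp)] at h
    rw [← sum_cellAdj_two_mul_add_one _ ht]
    simp only [s] at h
    rw [h, zero_add]
  have heven : ∀ t < k, cellSum x (2 * t) =
      α (2 * t) * (cellSum x (2 * t) + ∑ l ∈ Ico t k, cellSum x (2 * l + 1)) := by
    intro t ht
    rw [← sum_cellAdj_two_mul _ ht]
    have hlt : 2 * t < 2 * k := by omega
    have h : ∀ a : Fin (α (2 * t)), x ⟨⟨2 * t, hlt⟩, a⟩ = s (2 * t) := fun a => by
      simpa using (hvertex ⟨2 * t, hlt⟩ a).symm
    simp only [cellSum, dif_pos hlt, h, sum_const, card_univ, Fintype.card_fin, nsmul_eq_mul, s]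
  have hcell := eq_zero_of_cell_equations (fun t => (α (2 * t) : ℝ))
    (fun t ht => by exact_mod_cast hα (2 * t) (by omega)) _ _ hodd heven
  rcases lt_or_ge i (2 * k) with hi | hi
  · obtain ⟨t, rfl | rfl⟩ := Nat.even_or_odd' i
    · exact (hcell t (by omega)).1
    · exact (hcell t (by omega)).2
  · exact dif_neg (by omega)

theorem cographC_two_mul_mulVec_eq_zero_iff {α : ℕ → ℕ} {k : ℕ} (hα : ∀ i < 2 * k, 0 < α i)
    (x : (Σ j : Fin (2 * k), Fin (α j)) → ℝ) :
    adjMat (cographC α (2 * k)) *ᵥ x = 0 ↔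
      ∀ j : Fin (2 * k), if Even (j : ℕ) then ∀ a, x ⟨j, a⟩ = 0 else ∑ a, x ⟨j, a⟩ = 0 := by
  constructor
  · intro hx j
    have hc := cellSum_eq_zero_of_cographC_mulVec_eq_zero hα hx
    split_ifs with hj
    · intro a
      simpa [cographC_two_mul_mulVec_apply, hc, hj] using congrFun hx ⟨j, a⟩
    · simpa [cellSum] using hc j
  · intro h
    have hc : ∀ i, cellSum x i = 0 := by
      intro i
      unfold cellSum
      split_ifs with hi
      · have hcell := h ⟨i, hi⟩
        split_ifs at hcell
        · simp [hcell]
        · exact hcell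
      · rfl
    ext ⟨j, a⟩
    have hcell := h j
    split_ifs at hcell with hj <;> simp [cographC_two_mul_mulVec_apply, hc, hj, hcell]

noncomputable def cellKernel (α : ℕ → ℕ) (j : ℕ) : Submodule ℝ (Fin (α j) → ℝ) :=
  if Even j then ⊥ else LinearMap.ker (∑ a, LinearMap.proj a)

theorem mem_cellKernel {α : ℕ → ℕ} {j : ℕ} {y : Fin (α j) → ℝ} :
    y ∈ cellKernel α j ↔ if Even j then ∀ a, y a = 0 else ∑ a, y a = 0 := by
  unfold cellKernel
  split_ifs
  · simp [funext_iff]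
  · simp

theorem finrank_cellKernel {α : ℕ → ℕ} {j : ℕ} (hj : 0 < α j) :
    Module.finrank ℝ (cellKernel α j) = if Even j then 0 else α j - 1 := by
  by_cases hev : Even j
  · rw [cellKernel, if_pos hev, if_pos hev, finrank_bot]
  · have hne : (∑ a, LinearMap.proj a : Module.Dual ℝ (Fin (α j) → ℝ)) ≠ 0 := fun h =>
      hj.ne' (by simpa using LinearMap.congr_fun h fun _ => 1)
    have := Module.Dual.finrank_ker_add_one_of_ne_zero hne
    rw [Module.finrank_fin_fun] at this
    rw [cellKernel, if_neg hev, if_neg hev]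
    omega

theorem finrank_ker_cographC_two_mul {α : ℕ → ℕ} {k : ℕ} (hα : ∀ i < 2 * k, 0 < α i) :
    Module.finrank ℝ (LinearMap.ker (adjMat (cographC α (2 * k))).mulVecLin) =
      (∑ i ∈ range k, α (2 * i + 1)) - k := by
  have hker : LinearMap.ker (adjMat (cographC α (2 * k))).mulVecLin =
      (Submodule.pi Set.univ fun j : Fin (2 * k) => cellKernel α j).comap
        (LinearEquiv.piCurry ℝ fun _ _ => ℝ).toLinearMap := by
    ext x
    simp only [LinearMap.mem_ker, mulVecLin_apply, cographC_two_mul_mulVec_eq_zero_iff hα,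
      Submodule.mem_comap, Submodule.mem_pi, Set.mem_univ, true_implies, mem_cellKernel]
    rfl
  rw [hker, Submodule.comap_equiv_eq_map_symm, LinearEquiv.finrank_map_eq,
    Submodule.finrank_pi_univ]
  simp only [fun j : Fin (2 * k) => finrank_cellKernel (hα j j.isLt)]
  rw [Fin.sum_univ_eq_sum_range (fun j => if Even j then 0 else α j - 1), sum_range_two_mul]
  simp only [even_two_mul, if_true, Nat.not_even_bit1, if_false, zero_add]
  rw [sum_tsub_distrib _ fun i hi => hα _ (by rw [mem_range] at hi; omega), sum_const,
    card_range, smul_eq_mul, mul_one]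

theorem stmt11_general (k : ℕ) (α : ℕ → ℕ) (hα : ∀ i < 2 * k, 0 < α i) :
    (adjMat (cographC α (2 * k))).charpoly.rootMultiplicity 0 =
      (∑ i ∈ Finset.range k, α (2 * i + 1)) - k := by
  rw [(adjMat_isSymm _).rootMultiplicity_zero_charpoly, finrank_ker_cographC_two_mul hα]

/-- the multiplicity of the eigenvalue `0` of the adjacency matrix of
`G = C(α_1,…,α_{2k})` equals `∑_{i=1}^k α_{2i} - k`. (Paper's `α_{2i}` is `α (2*i+1)` in our
0-based indexing, `i = 0,…,k-1`.) -/
theorem stmt11 (k : ℕ) (hk : 1 ≤ k) (α : ℕ → ℕ) (hα : ∀ i < 2 * k, 0 < α i) :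
    (adjMat (cographC α (2 * k))).charpoly.rootMultiplicity 0 =
      (∑ i ∈ Finset.range k, α (2 * i + 1)) - k :=
  stmt11_general k α hα
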